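/- Let G, W ∈ ℝ^{N×N} with G diagonal. Define B = (I − WG)(I − WG)ᵀ and C = (I − GW)ᵀ(I − GW), and for vectors u, r ∈ ℝ^N define ΔW₁ = −η G (I − GW)^{-ᵀ} u rᵀ (assuming I − GW invertible) and ΔW₃ = −η (I − WG) G u rᵀ (I − GW)ᵀ (I − GW). Then ΔW₃ = B ΔW₁ C. -/

import Mathlib

open Matrix

namespace Matrix

variable {n R : Type*} [Fintype n] [DecidableEq n] [CommRing R]

theorem IsSymm.transpose_one_sub_mul_mul {G : Matrix n n R} (hG : G.IsSymm) (W : Matrix n n R) :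
    (1 - W * G)ᵀ * G = G * (1 - G * W)ᵀ := by
  simp only [transpose_sub, transpose_mul, transpose_one, hG.eq, sub_mul, mul_sub, one_mul,
    mul_one, Matrix.mul_assoc]

theorem IsSymm.transpose_one_sub_mul_mul_mul_inv_transpose {G : Matrix n n R} (hG : G.IsSymm)
    (W : Matrix n n R) (hGW : IsUnit (1 - G * W).det) :
    (1 - W * G)ᵀ * G * (1 - G * W)⁻¹ᵀ = G := by
  rw [hG.transpose_one_sub_mul_mul, Matrix.mul_assoc, ← transpose_mul, nonsing_inv_mul _ hGW,
    transpose_one, Matrix.mul_one]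

end Matrix

/-- With `B = (I - WG)(I - WG)ᵀ`, `C = (I - GW)ᵀ(I - GW)`,
`ΔW₁ = -η G (I - GW)⁻ᵀ u rᵀ` and `ΔW₃ = -η (I - WG) G u rᵀ (I - GW)ᵀ (I - GW)`,
one has `ΔW₃ = B ΔW₁ C`. -/
theorem stmt14 (N : ℕ) (G W : Matrix (Fin N) (Fin N) ℝ) (hG : G.IsDiag)
    (hGW : IsUnit (1 - G * W).det) (η : ℝ) (u r : Fin N → ℝ) :
    (-η) • ((1 - W * G) * G * Matrix.vecMulVec u r * (1 - G * W)ᵀ * (1 - G * W))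
      = ((1 - W * G) * (1 - W * G)ᵀ)
        * ((-η) • (G * ((1 - G * W)⁻¹)ᵀ * Matrix.vecMulVec u r))
        * ((1 - G * W)ᵀ * (1 - G * W)) := by
  rw [Matrix.mul_smul, Matrix.smul_mul]
  congr 1
  calc (1 - W * G) * G * vecMulVec u r * (1 - G * W)ᵀ * (1 - G * W)
      = (1 - W * G) * ((1 - W * G)ᵀ * G * (1 - G * W)⁻¹ᵀ) * vecMulVec u r
          * (1 - G * W)ᵀ * (1 - G * W) := by
        rw [hG.isSymm.transpose_one_sub_mul_mul_mul_inv_transpose W hGW]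
    _ = _ := by simp only [Matrix.mul_assoc]
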